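/- Let G be a finite simple graph, s, t vertices, and P, Q st-shortest paths of length k. Let S be a vertex set disjoint from V(P) ∪ V(Q), and let X_1, …, X_m be pairwise disjoint S-flaps of G, each disjoint from V(P) ∪ V(Q), that are pairwise equivalent: for all i, j there is a graph isomorphism between the induced subgraphs G[S ∪ X_i] and G[S ∪ X_j] restricting to the identity on S. If m > ⌈(k + 1)/2⌉, then, setting h = ⌈(k + 1)/2⌉, there exists a TJ-reconfiguration sequence from P to Q in G if and only if there exists one in the induced subgraph of G obtained by deleting X_{h+1} ∪ X_{h+2} ∪ … ∪ X_m. -/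

import Mathlib

/-!
A shortest `st`-path of length `k` meets at most `⌊k/2⌋` flaps: `s` and `t` lie in no flap,
and two consecutive vertices of a walk never lie in two different flaps.  Along a
reconfiguration sequence in `G` we therefore maintain an assignment `σ` of all flaps to the
`h = ⌈(k+1)/2⌉` kept ones that is injective on the flaps met by the current path.  A TJ-move
meets at most one new flap, and `h > ⌊k/2⌋`, so `σ` can be extended to it without changing its
values on the flaps still in use.  Moving every flap `X a` onto `X (σ a)` by the equivalences
is a graph homomorphism which is injective on the current path, and it maps the whole sequence
into the graph without the deleted flaps.  The converse is immediate, since this induced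
subgraph contains `P` and hence has the same `st`-distance as `G`.
-/

open SimpleGraph

/-- `W` is a shortest path from `s` to `t` in `G`: a path whose length (number of edges)
equals `dist_G(s,t)`. -/
def IsShortestSTPath {V : Type*} (G : SimpleGraph V) {s t : V} (W : G.Walk s t) : Prop :=
  W.IsPath ∧ W.length = G.dist s t

/-- Two `st`-paths of the same length are TJ-adjacent if their vertex sequences differ
at exactly one position. -/
def TJAdjacent {V : Type*} (G : SimpleGraph V) {s t : V} (P Q : G.Walk s t) : Prop :=
  P.length = Q.length ∧ ∃! i : ℕ, P.getVert i ≠ Q.getVert i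

/-- A TJ-reconfiguration sequence from `P` to `Q` of length `ℓ`: a sequence
`P = P_0, P_1, …, P_ℓ = Q` of `st`-shortest paths in which consecutive paths are
TJ-adjacent. -/
def TJSeq {V : Type*} (G : SimpleGraph V) {s t : V} (P Q : G.Walk s t) (ℓ : ℕ) : Prop :=
  ∃ f : ℕ → G.Walk s t, f 0 = P ∧ f ℓ = Q ∧
    (∀ i ≤ ℓ, IsShortestSTPath G (f i)) ∧ ∀ i < ℓ, TJAdjacent G (f i) (f (i + 1))

/-- An `S`-flap of `G`: a vertex set `X` disjoint from `S` with no edges of `G` between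
`X` and `V(G) ∖ (S ∪ X)`. -/
def IsFlap {V : Type*} (G : SimpleGraph V) (S X : Set V) : Prop :=
  X ∩ S = ∅ ∧ ∀ x ∈ X, ∀ y : V, y ∉ S → y ∉ X → ¬G.Adj x y

open Finset Function Relation

section

variable {V V' ι : Type*}

theorem Finset.card_le_div_two_of_separated {A : Finset ι} {p : ι → ℕ} {L : ℕ}
    (hp : ∀ a ∈ A, 0 < p a ∧ p a < L)
    (hsep : ∀ a ∈ A, ∀ b ∈ A, a ≠ b → p a + 2 ≤ p b ∨ p b + 2 ≤ p a) : #A ≤ L / 2 :=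
  calc #A ≤ #(Icc 1 (L / 2)) := by
        refine card_le_card_of_injOn (fun a => (p a + 1) / 2) (fun a ha => ?_)
          fun a ha b hb h => ?_
        · have := hp a ha
          simp only [coe_Icc, Set.mem_Icc]
          omega
        · by_contra hab
          have := hsep a ha b hb hab
          simp only at h
          omega
    _ = L / 2 := by simp

theorem Set.InjOn.exists_extend_of_card_sdiff_le_one {α β : Type*} [DecidableEq α] [Fintype β]
    {A B : Finset α} {σ : α → β} (hσ : Set.InjOn σ A) (hA : #A < Fintype.card β)
    (hB : #(B \ A) ≤ 1) : ∃ σ' : α → β, Set.InjOn σ' ↑(A ∪ B) ∧ Set.EqOn σ' σ A := by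
  classical
  obtain hBA | ⟨b, hb⟩ := (B \ A).eq_empty_or_nonempty
  · rw [Finset.union_eq_left.2 (Finset.sdiff_eq_empty_iff_subset.1 hBA)]
    exact ⟨σ, hσ, Set.eqOn_refl _ _⟩
  have hbA : b ∉ A := (Finset.mem_sdiff.1 hb).2
  have hAB : A ∪ B = insert b A := by
    rw [← Finset.union_sdiff_self_eq_union, Finset.eq_singleton_iff_unique_mem.2
      ⟨hb, fun x hx => card_le_one.1 hB x hx b hb⟩, Finset.union_comm, ← Finset.insert_eq]
  obtain ⟨c, -, hc⟩ := exists_mem_notMem_of_card_lt_card (s := A.image σ) (t := Finset.univ)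
    (card_image_le.trans_lt (by rwa [Finset.card_univ]))
  have hEq : Set.EqOn (update σ b c) σ A := fun a ha =>
    update_of_ne (ne_of_mem_of_not_mem ha hbA) _ _
  refine ⟨update σ b c, ?_, hEq⟩
  rw [hAB, coe_insert, Set.injOn_insert (by exact_mod_cast hbA), hEq.image_eq, update_self]
  exact ⟨hσ.congr hEq.symm, by simpa using hc⟩

namespace SimpleGraph.Walk

variable {G : SimpleGraph V} {G' : SimpleGraph V'} {u v : V} {u' v' : V'}
  {p : G.Walk u v} {p' : G'.Walk u' v'} {f : V → V'}

theorem exists_support_eq_map (f : G →g G') (p : G.Walk u v) (hu : f u = u') (hv : f v = v') :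
    ∃ p' : G'.Walk u' v', p'.support = p.support.map f :=
  ⟨(p.map f).copy hu hv, by simp⟩

theorem length_eq_of_support_eq_map (h : p'.support = p.support.map f) :
    p'.length = p.length := by
  simpa [length_support] using congrArg List.length h

theorem getVert_eq_of_support_eq_map (h : p'.support = p.support.map f) (i : ℕ) :
    p'.getVert i = f (p.getVert i) := by
  have hlen := length_eq_of_support_eq_map h
  have hle : ∀ j ≤ p.length, p'.getVert j = f (p.getVert j) := fun j hj => by
    have := p'.getVert_eq_support_getElem? (hlen ▸ hj)
    rw [h, List.getElem?_map, ← p.getVert_eq_support_getElem? hj] at this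
    simpa using this
  rcases le_total i p.length with hi | hi
  · exact hle i hi
  · have := hle _ le_rfl
    rw [getVert_length, ← hlen, getVert_length] at this
    rw [getVert_of_length_le _ (hlen ▸ hi), getVert_of_length_le _ hi, this]

end SimpleGraph.Walk

def TJStep {G : SimpleGraph V} {s t : V} (P Q : G.Walk s t) : Prop :=
  IsShortestSTPath G Q ∧ TJAdjacent G P Q

theorem exists_tjSeq_iff_reflTransGen {G : SimpleGraph V} {s t : V} {P Q : G.Walk s t} :
    (∃ ℓ, TJSeq G P Q ℓ) ↔ IsShortestSTPath G P ∧ ReflTransGen TJStep P Q := by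
  constructor
  · rintro ⟨ℓ, f, rfl, rfl, hshort, hadj⟩
    refine ⟨hshort 0 ℓ.zero_le, ?_⟩
    have : ∀ n ≤ ℓ, ReflTransGen TJStep (f 0) (f n) := fun n => by
      induction n with
      | zero => exact fun _ => .refl
      | succ n ih => exact fun hn => (ih (by omega)).tail ⟨hshort _ hn, hadj n (by omega)⟩
    exact this ℓ le_rfl
  · rintro ⟨hP, hPQ⟩
    induction hPQ with
    | refl =>
      exact ⟨0, fun _ => P, rfl, rfl, fun _ _ => hP, fun _ h => absurd h (Nat.not_lt_zero _)⟩
    | @tail R R' _ hstep ih =>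
      obtain ⟨ℓ, f, hf0, hfℓ, hshort, hadj⟩ := ih
      refine ⟨ℓ + 1, update f (ℓ + 1) R', ?_, by simp, fun i hi => ?_, fun i hi => ?_⟩
      · rwa [update_of_ne (by omega)]
      · rcases eq_or_ne i (ℓ + 1) with rfl | hi'
        · simpa using hstep.1
        · rw [update_of_ne hi']
          exact hshort i (by omega)
      · rcases eq_or_ne i ℓ with rfl | hi'
        · simpa [update_of_ne (Nat.succ_ne_self i).symm, hfℓ] using hstep.2
        · rw [update_of_ne (by omega), update_of_ne (by omega)]
          exact hadj i (by omega)

section Transport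

variable {G : SimpleGraph V} {G' : SimpleGraph V'} {s t : V} {s' t' : V'}
  {p q : G.Walk s t} {p' q' : G'.Walk s' t'} {f : V → V'}

theorem IsShortestSTPath.of_support_eq_map (hp : IsShortestSTPath G p)
    (hf : Set.InjOn f {v | v ∈ p.support}) (h : p'.support = p.support.map f)
    (hdist : G'.dist s' t' = G.dist s t) : IsShortestSTPath G' p' :=
  ⟨p'.isPath_def.2 (h ▸ hp.1.support_nodup.map_on fun _ hx _ hy => hf hx hy),
    (Walk.length_eq_of_support_eq_map h).trans (hp.2.trans hdist.symm)⟩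

theorem TJAdjacent.of_support_eq_map (hpq : TJAdjacent G p q)
    (hf : Set.InjOn f {v | v ∈ p.support ∨ v ∈ q.support})
    (hp : p'.support = p.support.map f) (hq : q'.support = q.support.map f) :
    TJAdjacent G' p' q' := by
  have hne : ∀ i, p'.getVert i ≠ q'.getVert i ↔ p.getVert i ≠ q.getVert i := fun i => by
    rw [Walk.getVert_eq_of_support_eq_map hp, Walk.getVert_eq_of_support_eq_map hq,
      hf.ne_iff (.inl (p.getVert_mem_support i)) (.inr (q.getVert_mem_support i))]
  refine ⟨?_, by simpa only [hne] using hpq.2⟩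
  rw [Walk.length_eq_of_support_eq_map hp, Walk.length_eq_of_support_eq_map hq, hpq.1]

theorem TJStep.of_support_eq_map (hpq : TJStep p q)
    (hf : Set.InjOn f {v | v ∈ p.support ∨ v ∈ q.support})
    (hp : p'.support = p.support.map f) (hq : q'.support = q.support.map f)
    (hdist : G'.dist s' t' = G.dist s t) : TJStep p' q' :=
  ⟨hpq.1.of_support_eq_map (hf.mono fun _ => .inr) hq hdist, hpq.2.of_support_eq_map hf hp hq⟩

end Transport

section Induce

variable {G : SimpleGraph V} {D : Set V} {s t : D} {P Q : G.Walk s t}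
  {P' Q' : (G.induce D).Walk s t}

theorem IsShortestSTPath.dist_induce_eq (hP : IsShortestSTPath G P)
    (hPP' : P'.support.map Subtype.val = P.support) : (G.induce D).dist s t = G.dist s t := by
  have hP'len : P'.length = G.dist s t :=
    (Walk.length_eq_of_support_eq_map hPP'.symm).symm.trans hP.2
  refine le_antisymm (hP'len ▸ dist_le P') ?_
  obtain ⟨w, hw⟩ := P'.reachable.exists_walk_length_eq_dist
  calc G.dist s t ≤ (w.map (Embedding.induce D).toHom).length := dist_le _
    _ = _ := by rw [Walk.length_map, hw]

theorem IsShortestSTPath.induce (hP : IsShortestSTPath G P)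
    (hPP' : P'.support.map Subtype.val = P.support) : IsShortestSTPath (G.induce D) P' :=
  ⟨P'.isPath_def.2 ((hPP' ▸ hP.1.support_nodup).of_map _),
    (Walk.length_eq_of_support_eq_map hPP'.symm).symm.trans
      (hP.2.trans (hP.dist_induce_eq hPP').symm)⟩

theorem reflTransGen_tjStep_of_induce (hP : IsShortestSTPath G P)
    (hPP' : P'.support.map Subtype.val = P.support)
    (hQQ' : Q'.support.map Subtype.val = Q.support) (h : ReflTransGen TJStep P' Q') :
    ReflTransGen TJStep P Q := by
  have hdist := hP.dist_induce_eq hPP'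
  have hsupp : ∀ w : (G.induce D).Walk s t,
      (w.map (Embedding.induce D).toHom).support = w.support.map Subtype.val :=
    fun w => Walk.support_map _ w
  rw [← Walk.ext_support ((hsupp P').trans hPP'), ← Walk.ext_support ((hsupp Q').trans hQQ')]
  exact h.lift _ fun p q hpq =>
    hpq.of_support_eq_map Subtype.val_injective.injOn (hsupp p) (hsupp q) hdist.symm

end Induce

structure EquivalentFlaps (G : SimpleGraph V) (S : Set V) (X : ι → Set V) where
  iso : ∀ i j, G.induce (S ∪ X i) ≃g G.induce (S ∪ X j)
  iso_apply_of_mem : ∀ i j (x : ↥(S ∪ X i)), (x : V) ∈ S → (iso i j x : V) = x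
  isFlap : ∀ i, IsFlap G S (X i)
  pairwise_disjoint : Pairwise (Disjoint on X)

open Classical in
noncomputable def SimpleGraph.Walk.visitedFlaps [Fintype ι] {G : SimpleGraph V} {s t : V}
    (X : ι → Set V) (w : G.Walk s t) : Finset ι :=
  {a | ∃ v ∈ w.support, v ∈ X a}

theorem SimpleGraph.Walk.mem_visitedFlaps [Fintype ι] {G : SimpleGraph V} {s t : V}
    {X : ι → Set V} {w : G.Walk s t} {a : ι} :
    a ∈ w.visitedFlaps X ↔ ∃ v ∈ w.support, v ∈ X a := by
  simp [visitedFlaps]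

namespace EquivalentFlaps

variable {κ : Type*} {G : SimpleGraph V} {S : Set V} {X : ι → Set V} {s t u v : V} {a b : ι}

theorem notMem_of_mem (F : EquivalentFlaps G S X) (hv : v ∈ X a) : v ∉ S :=
  fun hS => (F.isFlap a).1.subset ⟨hv, hS⟩

theorem eq_of_mem (F : EquivalentFlaps G S X) (ha : v ∈ X a) (hb : v ∈ X b) : a = b :=
  F.pairwise_disjoint.eq (Set.not_disjoint_iff.2 ⟨v, ha, hb⟩)

theorem mem_of_adj (F : EquivalentFlaps G S X) (hu : u ∈ X a) (h : G.Adj u v) :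
    v ∈ S ∪ X a := by
  by_contra hv
  exact (F.isFlap a).2 u hu v (fun hS => hv (.inl hS)) (fun hX => hv (.inr hX)) h

theorem not_adj (F : EquivalentFlaps G S X) (hu : u ∈ X a) (hv : v ∈ X b) (hab : a ≠ b) :
    ¬G.Adj u v := fun h =>
  (F.mem_of_adj hu h).elim (F.notMem_of_mem hv) fun hva => hab (F.eq_of_mem hva hv)

theorem iso_apply_mem (F : EquivalentFlaps G S X) (hv : v ∈ X a) (b : ι) :
    (F.iso a b ⟨v, .inr hv⟩ : V) ∈ X b := by
  refine (F.iso a b ⟨v, .inr hv⟩).2.resolve_left fun hS => F.notMem_of_mem hv ?_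
  set y := F.iso a b ⟨v, .inr hv⟩
  have hfix : F.iso a b ⟨y, .inl hS⟩ = y := Subtype.ext (F.iso_apply_of_mem a b ⟨y, _⟩ hS)
  have : (y : V) = v := congrArg Subtype.val ((F.iso a b).injective hfix)
  exact this ▸ hS

open Classical in
noncomputable def relabel (F : EquivalentFlaps G S X) (τ : ι → ι) (v : V) : V :=
  if h : ∃ a, v ∈ X a then F.iso h.choose (τ h.choose) ⟨v, .inr h.choose_spec⟩ else v

section Relabel

variable (F : EquivalentFlaps G S X) (τ : ι → ι)

theorem relabel_of_forall_notMem (hv : ∀ a, v ∉ X a) : F.relabel τ v = v :=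
  dif_neg (not_exists.2 hv)

theorem map_relabel_of_forall_notMem {l : List V} (hl : ∀ a, ∀ v ∈ l, v ∉ X a) :
    l.map (F.relabel τ) = l :=
  (List.map_congr_left fun v hv => F.relabel_of_forall_notMem τ fun a => hl a v hv).trans
    (List.map_id' l)

theorem relabel_eq_iso (hv : v ∈ S ∪ X a) : F.relabel τ v = F.iso a (τ a) ⟨v, hv⟩ := by
  rcases hv with hS | hX
  · rw [F.relabel_of_forall_notMem τ fun b hb => F.notMem_of_mem hb hS,
      F.iso_apply_of_mem _ _ _ hS]
  · have h : ∃ b, v ∈ X b := ⟨a, hX⟩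
    obtain rfl := F.eq_of_mem h.choose_spec hX
    exact dif_pos h

theorem relabel_mem (hv : v ∈ X a) : F.relabel τ v ∈ X (τ a) :=
  F.relabel_eq_iso τ (.inr hv) ▸ F.iso_apply_mem hv (τ a)

theorem mem_range_of_relabel_mem (h : F.relabel τ v ∈ X a) : a ∈ Set.range τ := by
  by_cases hv : ∃ b, v ∈ X b
  · obtain ⟨b, hb⟩ := hv
    exact ⟨b, F.eq_of_mem (F.relabel_mem τ hb) h⟩
  · push Not at hv
    rw [F.relabel_of_forall_notMem τ hv] at h
    exact absurd h (hv a)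

theorem relabel_congr {τ' : ι → ι} (h : ∀ a, v ∈ X a → τ a = τ' a) :
    F.relabel τ v = F.relabel τ' v := by
  by_cases hv : ∃ a, v ∈ X a
  · obtain ⟨a, ha⟩ := hv
    rw [F.relabel_eq_iso τ (.inr ha), F.relabel_eq_iso τ' (.inr ha), h a ha]
  · push Not at hv
    rw [F.relabel_of_forall_notMem τ hv, F.relabel_of_forall_notMem τ' hv]

theorem adj_relabel_of_mem (hu : u ∈ X a) (h : G.Adj u v) :
    G.Adj (F.relabel τ u) (F.relabel τ v) := by
  rw [F.relabel_eq_iso τ (.inr hu), F.relabel_eq_iso τ (F.mem_of_adj hu h)]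
  exact induce_adj.1 ((F.iso a (τ a)).map_adj_iff.2 (induce_adj.2 h))

theorem relabel_adj (h : G.Adj u v) : G.Adj (F.relabel τ u) (F.relabel τ v) := by
  by_cases hu : ∃ a, u ∈ X a
  · exact F.adj_relabel_of_mem τ hu.choose_spec h
  by_cases hv : ∃ a, v ∈ X a
  · exact (F.adj_relabel_of_mem τ hv.choose_spec h.symm).symm
  push Not at hu hv
  rwa [F.relabel_of_forall_notMem τ hu, F.relabel_of_forall_notMem τ hv]

theorem eq_of_relabel_eq_of_mem {A : Set ι} (hτ : Set.InjOn τ A) (hu : ∀ a, u ∈ X a → a ∈ A)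
    (hv : ∀ a, v ∈ X a → a ∈ A) (huv : F.relabel τ u = F.relabel τ v) (ha : u ∈ X a) :
    u = v := by
  have hmem := F.relabel_mem τ ha
  obtain ⟨b, hb⟩ : ∃ b, v ∈ X b := by
    by_contra! hv'
    rw [huv, F.relabel_of_forall_notMem τ hv'] at hmem
    exact hv' _ hmem
  obtain rfl : a = b := hτ (hu a ha) (hv b hb) (F.eq_of_mem hmem (huv ▸ F.relabel_mem τ hb))
  rw [F.relabel_eq_iso τ (.inr ha), F.relabel_eq_iso τ (.inr hb)] at huv
  exact congrArg Subtype.val ((F.iso a (τ a)).injective (Subtype.ext huv))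

theorem relabel_injOn {A : Set ι} (hτ : Set.InjOn τ A) :
    Set.InjOn (F.relabel τ) {v | ∀ a, v ∈ X a → a ∈ A} := by
  intro u hu v hv huv
  by_cases hu' : ∃ a, u ∈ X a
  · exact F.eq_of_relabel_eq_of_mem τ hτ hu hv huv hu'.choose_spec
  by_cases hv' : ∃ a, v ∈ X a
  · exact (F.eq_of_relabel_eq_of_mem τ hτ hv hu huv.symm hv'.choose_spec).symm
  push Not at hu' hv'
  rwa [F.relabel_of_forall_notMem τ hu', F.relabel_of_forall_notMem τ hv'] at huv

end Relabel

noncomputable def relabelInto (F : EquivalentFlaps G S X) (e : κ → ι) {D : Set V}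
    (hD : ∀ v, (∀ a, v ∈ X a → a ∈ Set.range e) → v ∈ D) (σ : ι → κ) : G →g G.induce D where
  toFun v := ⟨F.relabel (e ∘ σ) v, hD _ fun _ ha =>
    Set.range_comp_subset_range σ e (F.mem_range_of_relabel_mem _ ha)⟩
  map_rel' h := induce_adj.2 (F.relabel_adj _ h)

@[simp]
theorem coe_relabelInto (F : EquivalentFlaps G S X) (e : κ → ι) {D : Set V}
    (hD : ∀ v, (∀ a, v ∈ X a → a ∈ Set.range e) → v ∈ D) (σ : ι → κ) (v : V) :
    (F.relabelInto e hD σ v : V) = F.relabel (e ∘ σ) v :=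
  rfl

variable [Fintype ι]

theorem card_visitedFlaps_le (F : EquivalentFlaps G S X) (w : G.Walk s t) (hs : ∀ a, s ∉ X a)
    (ht : ∀ a, t ∉ X a) : #(w.visitedFlaps X) ≤ w.length / 2 := by
  have hpos : ∀ a ∈ w.visitedFlaps X, ∃ p, 0 < p ∧ p < w.length ∧ w.getVert p ∈ X a := by
    intro a ha
    obtain ⟨v, hv, hva⟩ := Walk.mem_visitedFlaps.1 ha
    obtain ⟨p, rfl, hp⟩ := Walk.mem_support_iff_exists_getVert.1 hv
    refine ⟨p, Nat.pos_of_ne_zero ?_, hp.lt_of_ne ?_, hva⟩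
    · rintro rfl
      exact hs a (by simpa using hva)
    · rintro rfl
      exact ht a (by simpa using hva)
  choose! p hp using hpos
  refine card_le_div_two_of_separated (p := p) (fun a ha => ⟨(hp a ha).1, (hp a ha).2.1⟩) ?_
  have hnext : ∀ a ∈ w.visitedFlaps X, ∀ b ∈ w.visitedFlaps X, a ≠ b → p a + 1 ≠ p b :=
    fun a ha b hb hab h => F.not_adj (hp a ha).2.2 (h ▸ (hp b hb).2.2) hab
      (w.adj_getVert_succ (hp a ha).2.1)
  intro a ha b hb hab
  have : p a ≠ p b := fun h => hab (F.eq_of_mem (hp a ha).2.2 (h ▸ (hp b hb).2.2))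
  have := hnext a ha b hb hab
  have := hnext b hb a ha hab.symm
  omega

variable [DecidableEq ι]

theorem card_visitedFlaps_sdiff_le_one (F : EquivalentFlaps G S X) {R R' : G.Walk s t}
    (h : TJAdjacent G R R') : #(R'.visitedFlaps X \ R.visitedFlaps X) ≤ 1 := by
  obtain ⟨-, i, -, huniq⟩ := h
  have hnew : ∀ a ∈ R'.visitedFlaps X \ R.visitedFlaps X, R'.getVert i ∈ X a := by
    intro a ha
    rw [mem_sdiff, Walk.mem_visitedFlaps, Walk.mem_visitedFlaps] at ha
    obtain ⟨⟨v, hv, hva⟩, hold⟩ := ha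
    obtain ⟨j, rfl, -⟩ := Walk.mem_support_iff_exists_getVert.1 hv
    obtain rfl | hj := eq_or_ne j i
    · exact hva
    · exact absurd ⟨R.getVert j, R.getVert_mem_support j, not_not.1 (mt (huniq j) hj) ▸ hva⟩ hold
  exact card_le_one.2 fun a ha b hb => F.eq_of_mem (hnew a ha) (hnew b hb)

theorem exists_relabel_of_reflTransGen [Fintype κ] (F : EquivalentFlaps G S X) {e : κ → ι}
    (he : Injective e) {D : Set V} (hD : ∀ v, (∀ a, v ∈ X a → a ∈ Set.range e) → v ∈ D)
    (hsD : s ∈ D) (htD : t ∈ D) (hκ : G.dist s t / 2 < Fintype.card κ)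
    (hdist : (G.induce D).dist ⟨s, hsD⟩ ⟨t, htD⟩ = G.dist s t) {P R : G.Walk s t}
    (hPX : ∀ a, ∀ v ∈ P.support, v ∉ X a) {P' : (G.induce D).Walk ⟨s, hsD⟩ ⟨t, htD⟩}
    (hP' : P'.support.map Subtype.val = P.support) (hPR : ReflTransGen TJStep P R) :
    ∃ σ : ι → κ, Set.InjOn σ (R.visitedFlaps X) ∧
      ∃ R' : (G.induce D).Walk ⟨s, hsD⟩ ⟨t, htD⟩,
        R'.support = R.support.map (F.relabelInto e hD σ) ∧ ReflTransGen TJStep P' R' := by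
  have hsX : ∀ a, s ∉ X a := fun a => hPX a s P.start_mem_support
  have htX : ∀ a, t ∉ X a := fun a => hPX a t P.end_mem_support
  induction hPR with
  | refl =>
    obtain ⟨c⟩ : Nonempty κ := Fintype.card_pos_iff.1 (by omega)
    refine ⟨fun _ => c, fun a ha => ?_, P', ?_, .refl⟩
    · obtain ⟨v, hv, hva⟩ := Walk.mem_visitedFlaps.1 ha
      exact (hPX a v hv hva).elim
    · refine List.map_injective_iff.2 Subtype.val_injective ?_
      rw [hP', List.map_map]
      exact (F.map_relabel_of_forall_notMem _ hPX).symm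
  | @tail R₁ R₂ _ hstep ih =>
    obtain ⟨σ, hσ, R₁', hR₁', hPR₁'⟩ := ih
    have hcard : #(R₁.visitedFlaps X) < Fintype.card κ :=
      (F.card_visitedFlaps_le R₁ hsX htX).trans_lt (by rwa [hstep.2.1, hstep.1.2])
    obtain ⟨σ', hσ'inj, hσ'eq⟩ := hσ.exists_extend_of_card_sdiff_le_one hcard
      (F.card_visitedFlaps_sdiff_le_one hstep.2)
    obtain ⟨R₂', hR₂'⟩ := R₂.exists_support_eq_map (F.relabelInto e hD σ')
      (u' := ⟨s, hsD⟩) (v' := ⟨t, htD⟩)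
      (Subtype.ext ((F.coe_relabelInto ..).trans (F.relabel_of_forall_notMem _ hsX)))
      (Subtype.ext ((F.coe_relabelInto ..).trans (F.relabel_of_forall_notMem _ htX)))
    have hR₁'' : R₁'.support = R₁.support.map (F.relabelInto e hD σ') := by
      rw [hR₁']
      refine List.map_congr_left fun v hv => Subtype.ext (F.relabel_congr _ fun a ha => ?_)
      exact congrArg e (hσ'eq (Walk.mem_visitedFlaps.2 ⟨v, hv, ha⟩)).symm
    have hflaps : ∀ v, v ∈ R₁.support ∨ v ∈ R₂.support →
        ∀ a, v ∈ X a → a ∈ (↑(R₁.visitedFlaps X ∪ R₂.visitedFlaps X) : Set ι) :=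
      fun v hv a ha => by
        simp only [coe_union, Set.mem_union, mem_coe, Walk.mem_visitedFlaps]
        exact hv.imp (fun hv => ⟨v, hv, ha⟩) fun hv => ⟨v, hv, ha⟩
    have hinj : Set.InjOn (F.relabelInto e hD σ') {v | v ∈ R₁.support ∨ v ∈ R₂.support} :=
      fun u hu w hw h => F.relabel_injOn _ (he.comp_injOn hσ'inj) (hflaps u hu) (hflaps w hw)
        (congrArg Subtype.val h)
    exact ⟨σ', hσ'inj.mono (by simp), R₂', hR₂',
      hPR₁'.tail (hstep.of_support_eq_map hinj hR₁'' hR₂' hdist)⟩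

end EquivalentFlaps

end

theorem stmt_17_general {V : Type*} (G : SimpleGraph V) (s t : V) (k : ℕ)
    (hk : G.dist s t = k)
    (P Q : G.Walk s t) (hP : IsShortestSTPath G P)
    (S : Set V)
    (m : ℕ) (X : Fin m → Set V)
    (hflap : ∀ i, IsFlap G S (X i))
    (hdisj : ∀ i j, i ≠ j → Disjoint (X i) (X j))
    (hXPQ : ∀ i, ∀ x ∈ X i, x ∉ P.support ∧ x ∉ Q.support)
    (hequiv : ∀ i j, ∃ φ : G.induce (S ∪ X i) ≃g G.induce (S ∪ X j),
      ∀ x : ↥(S ∪ X i), (x : V) ∈ S → ((φ x : V) = (x : V)))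
    (hm : (k + 1 + 1) / 2 < m) :
    (∃ ℓ : ℕ, TJSeq G P Q ℓ) ↔
      ∃ (hs : s ∈ ({x : V | ∃ i : Fin m, (k + 1 + 1) / 2 ≤ (i : ℕ) ∧ x ∈ X i}ᶜ : Set V))
        (ht : t ∈ ({x : V | ∃ i : Fin m, (k + 1 + 1) / 2 ≤ (i : ℕ) ∧ x ∈ X i}ᶜ : Set V))
        (P' Q' : (G.induce ({x : V | ∃ i : Fin m, (k + 1 + 1) / 2 ≤ (i : ℕ) ∧ x ∈ X i}ᶜ :
          Set V)).Walk ⟨s, hs⟩ ⟨t, ht⟩),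
        P'.support.map Subtype.val = P.support ∧
        Q'.support.map Subtype.val = Q.support ∧
        ∃ ℓ : ℕ, TJSeq (G.induce ({x : V | ∃ i : Fin m, (k + 1 + 1) / 2 ≤ (i : ℕ) ∧ x ∈ X i}ᶜ :
          Set V)) P' Q' ℓ := by
  choose φ hφ using hequiv
  let F : EquivalentFlaps G S X := ⟨φ, hφ, hflap, fun i j => hdisj i j⟩
  set D : Set V := {x : V | ∃ i : Fin m, (k + 1 + 1) / 2 ≤ (i : ℕ) ∧ x ∈ X i}ᶜ
  have hPX : ∀ a, ∀ v ∈ P.support, v ∉ X a := fun a v hv ha => (hXPQ a v ha).1 hv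
  have hQX : ∀ a, ∀ v ∈ Q.support, v ∉ X a := fun a v hv ha => (hXPQ a v ha).2 hv
  have hPD : ∀ v ∈ P.support, v ∈ D := fun v hv ⟨i, _, hi⟩ => hPX i v hv hi
  have hD : ∀ v, (∀ a, v ∈ X a → a ∈ Set.range (Fin.castLE hm.le)) → v ∈ D := by
    rintro v hv ⟨i, hi, hvi⟩
    have := hv i hvi
    simp only [Fin.range_castLE, Set.mem_ofPred_eq] at this
    omega
  have hsD : s ∈ D := hPD s P.start_mem_support
  have htD : t ∈ D := hPD t P.end_mem_support
  let P' := P.induce D hPD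
  have hP' : P'.support.map Subtype.val = P.support := by simp [P']
  have hP'short := hP.induce (s := ⟨s, hsD⟩) (t := ⟨t, htD⟩) hP'
  rw [exists_tjSeq_iff_reflTransGen]
  constructor
  · rintro ⟨-, hPQ⟩
    obtain ⟨σ, -, Q', hQ', hP'Q'⟩ := F.exists_relabel_of_reflTransGen
      (Fin.castLE_injective hm.le) hD hsD htD (by rw [hk, Fintype.card_fin]; omega)
      (hP.dist_induce_eq hP') hPX hP' hPQ
    refine ⟨hsD, htD, P', Q', hP', ?_, exists_tjSeq_iff_reflTransGen.2 ⟨hP'short, hP'Q'⟩⟩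
    rw [hQ', List.map_map]
    exact F.map_relabel_of_forall_notMem _ hQX
  · rintro ⟨hs, ht, P', Q', hP', hQ', hP'Q'⟩
    exact ⟨hP, reflTransGen_tjStep_of_induce hP hP' hQ' (exists_tjSeq_iff_reflTransGen.1 hP'Q').2⟩

/-- Let `P, Q` be `st`-shortest paths of length `k`, let `S` be a vertex
set disjoint from `V(P) ∪ V(Q)`, and let `X 0, …, X (m−1)` be pairwise disjoint `S`-flaps,
each disjoint from `V(P) ∪ V(Q)`, that are pairwise equivalent (for all `i, j` there is an
isomorphism `G[S ∪ X i] ≃g G[S ∪ X j]` restricting to the identity on `S`). If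
`m > ⌈(k+1)/2⌉ = h`, then there is a TJ-reconfiguration sequence from `P` to `Q` in `G` iff
there is one in the induced subgraph obtained by deleting the flaps `X h, …, X (m−1)`
(keeping only the first `h` flaps). -/
theorem stmt_17 {V : Type*} [Fintype V] (G : SimpleGraph V) (s t : V) (k : ℕ)
    (hk : G.dist s t = k)
    (P Q : G.Walk s t) (hP : IsShortestSTPath G P) (hQ : IsShortestSTPath G Q)
    (S : Set V) (hS : ∀ x ∈ S, x ∉ P.support ∧ x ∉ Q.support)
    (m : ℕ) (X : Fin m → Set V)
    (hflap : ∀ i, IsFlap G S (X i))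
    (hdisj : ∀ i j, i ≠ j → Disjoint (X i) (X j))
    (hXPQ : ∀ i, ∀ x ∈ X i, x ∉ P.support ∧ x ∉ Q.support)
    (hequiv : ∀ i j, ∃ φ : G.induce (S ∪ X i) ≃g G.induce (S ∪ X j),
      ∀ x : ↥(S ∪ X i), (x : V) ∈ S → ((φ x : V) = (x : V)))
    (hm : (k + 1 + 1) / 2 < m) :
    (∃ ℓ : ℕ, TJSeq G P Q ℓ) ↔
      ∃ (hs : s ∈ ({x : V | ∃ i : Fin m, (k + 1 + 1) / 2 ≤ (i : ℕ) ∧ x ∈ X i}ᶜ : Set V))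
        (ht : t ∈ ({x : V | ∃ i : Fin m, (k + 1 + 1) / 2 ≤ (i : ℕ) ∧ x ∈ X i}ᶜ : Set V))
        (P' Q' : (G.induce ({x : V | ∃ i : Fin m, (k + 1 + 1) / 2 ≤ (i : ℕ) ∧ x ∈ X i}ᶜ :
          Set V)).Walk ⟨s, hs⟩ ⟨t, ht⟩),
        P'.support.map Subtype.val = P.support ∧
        Q'.support.map Subtype.val = Q.support ∧
        ∃ ℓ : ℕ, TJSeq (G.induce ({x : V | ∃ i : Fin m, (k + 1 + 1) / 2 ≤ (i : ℕ) ∧ x ∈ X i}ᶜ :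
          Set V)) P' Q' ℓ :=
  stmt_17_general G s t k hk P Q hP S m X hflap hdisj hXPQ hequiv hm
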